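/- For every word u on a well-ordered alphabet, the leading word (with respect to the graded lex order) of the standard bracketing [u] equals u, and the coefficient of u in [u] is 1. -/

import Mathlib

/-- The lexicographic order of the paper: `u <_lex v` iff `v` is a proper prefix of `u`,
or `u = r ++ x :: s`, `v = r ++ y :: t` with letters `x < y`. -/
def PLt {X : Type*} [LinearOrder X] (u v : List X) : Prop :=
  (v <+: u ∧ v ≠ u) ∨
    ∃ (r s t : List X) (x y : X), x < y ∧ u = r ++ x :: s ∧ v = r ++ y :: t

def PLe {X : Type*} [LinearOrder X] (u v : List X) : Prop := PLt u v ∨ u = v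

/-- A nonempty word is Lyndon iff `u >_lex w ++ v` for every factorization `u = v ++ w`
with `v, w` nonempty. -/
def IsLyndon {X : Type*} [LinearOrder X] (u : List X) : Prop :=
  u ≠ [] ∧ ∀ v w : List X, u = v ++ w → v ≠ [] → w ≠ [] → PLt (w ++ v) u

/-- The graded lex order: compare first by degree, then by `<_lex`. -/
def GLt {X : Type*} [LinearOrder X] (deg : X → ℕ) (u v : List X) : Prop :=
  (u.map deg).sum < (v.map deg).sum ∨ ((u.map deg).sum = (v.map deg).sum ∧ PLt u v)

/-- The free algebra `k⟨X⟩`, with the words on `X` as a basis. -/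
abbrev FreeAlg (k X : Type*) [Field k] := MonoidAlgebra k (FreeMonoid X)

/-- `w` is the leading word of `f` with respect to the order `lt` on words. -/
def IsLeadingWord {k X : Type*} [Field k] (lt : FreeMonoid X → FreeMonoid X → Prop)
    (f : FreeAlg k X) (w : FreeMonoid X) : Prop :=
  w ∈ f.coeff.support ∧ ∀ u ∈ f.coeff.support, u ≠ w → lt u w

/-- A word is reducible with respect to a set `S ⊆ k⟨X⟩` if it is the leading word of a
nonzero element of `S`. -/
def Reducible {k X : Type*} [Field k] (lt : FreeMonoid X → FreeMonoid X → Prop)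
    (S : Set (FreeAlg k X)) (w : FreeMonoid X) : Prop :=
  ∃ f ∈ S, f ≠ 0 ∧ IsLeadingWord lt f w

/-- `v` is a factor of `u`. -/
def IsFactor {X : Type*} (v u : FreeMonoid X) : Prop := ∃ a b : FreeMonoid X, u = a * v * b

/-!
Multiplication in `k⟨X⟩` is compatible with the graded lex order on words: if `w < a` and
`w'` has degree at most that of `b`, or `w = a` and `w' < b`, then `w w' < a b`. Hence the
leading word of a product `f g` of polynomials with leading words `a`, `b` and leading
coefficients `1` is `a b`, with coefficient `1`. For a commutator `f g - g f` the leading word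
`a b` survives, because for a Lyndon word `a b` the other product `b a` has the same degree and
is lex smaller. Induction on the length of `u` along the Shirshov factorization finishes the
proof.
-/

section GradedLex

variable {X : Type*} {deg : X → ℕ}

theorem eq_of_prefix_of_degree_eq (hdeg : ∀ x, 0 < deg x) {u v : List X} (h : v <+: u)
    (hD : (u.map deg).sum = (v.map deg).sum) : u = v := by
  obtain ⟨t, rfl⟩ := h
  have ht : (t.map deg).sum = 0 := by
    rw [List.map_append, List.sum_append] at hD
    omega
  rw [List.sum_eq_zero_iff_forall_eq_nat] at ht
  rw [List.eq_nil_iff_forall_not_mem.mpr fun x hx => (hdeg x).ne' (ht _ (List.mem_map_of_mem hx)),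
    List.append_nil]

variable [LinearOrder X]

theorem PLt.irrefl (u : List X) : ¬ PLt u u := by
  rintro (⟨-, hne⟩ | ⟨r, s, t, x, y, hxy, rfl, heq⟩)
  · exact hne rfl
  · obtain ⟨rfl, -⟩ := List.cons_eq_cons.mp (List.append_cancel_left heq)
    exact hxy.false

theorem GLt.irrefl (u : List X) : ¬ GLt deg u u := by
  rintro (h | ⟨-, h⟩)
  · exact h.false
  · exact PLt.irrefl u h

theorem GLt.degree_le {u v : List X} (h : GLt deg u v) : (u.map deg).sum ≤ (v.map deg).sum :=
  h.elim le_of_lt fun h => h.1.le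

theorem PLt.exists_letter_lt_of_degree_eq (hdeg : ∀ x, 0 < deg x) {u v : List X}
    (hD : (u.map deg).sum = (v.map deg).sum) (h : PLt u v) :
    ∃ (r s t : List X) (x y : X), x < y ∧ u = r ++ x :: s ∧ v = r ++ y :: t := by
  rcases h with ⟨hpre, hne⟩ | h
  · exact absurd (eq_of_prefix_of_degree_eq hdeg hpre hD).symm hne
  · exact h

theorem List.lex_append_cons_of_lt {r s t : List X} {x y : X} (hxy : x < y) :
    List.Lex (· < ·) (r ++ x :: s) (r ++ y :: t) := by
  induction r with
  | nil => exact List.Lex.rel hxy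
  | cons a r ih => exact List.Lex.cons ih

theorem List.Lex.prefix_or_exists_letter_lt {u v : List X} (h : List.Lex (· < ·) u v) :
    (u <+: v ∧ u ≠ v) ∨
      ∃ (r s t : List X) (x y : X), x < y ∧ u = r ++ x :: s ∧ v = r ++ y :: t := by
  induction h with
  | nil => exact Or.inl ⟨List.nil_prefix, (List.cons_ne_nil _ _).symm⟩
  | @cons a l₁ l₂ h ih =>
    rcases ih with ⟨hp, hne⟩ | ⟨r, s, t, x, y, hxy, rfl, rfl⟩
    · exact Or.inl ⟨List.cons_prefix_cons.mpr ⟨rfl, hp⟩, by simpa using hne⟩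
    · exact Or.inr ⟨a :: r, s, t, x, y, hxy, rfl, rfl⟩
  | @rel a l₁ b l₂ h => exact Or.inr ⟨[], l₁, l₂, a, b, h, rfl, rfl⟩

/-- On words of equal degree `PLt` agrees with `List.Lex (· < ·)`, which is transitive. -/
theorem GLt.trans (hdeg : ∀ x, 0 < deg x) {u v w : List X}
    (huv : GLt deg u v) (hvw : GLt deg v w) : GLt deg u w := by
  rcases huv with huv | ⟨e₁, p₁⟩ <;> rcases hvw with hvw | ⟨e₂, p₂⟩
  · exact Or.inl (huv.trans hvw)
  · exact Or.inl (e₂ ▸ huv)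
  · exact Or.inl (e₁ ▸ hvw)
  · refine Or.inr ⟨e₁.trans e₂, ?_⟩
    obtain ⟨r, s, t, x, y, hxy, rfl, rfl⟩ := p₁.exists_letter_lt_of_degree_eq hdeg e₁
    obtain ⟨r', s', t', x', y', hxy', heq, rfl⟩ := p₂.exists_letter_lt_of_degree_eq hdeg e₂
    have hlex : List.Lex (· < ·) (r ++ x :: s) (r' ++ y' :: t') :=
      List.lex_trans (fun h₁ h₂ => lt_trans h₁ h₂) (List.lex_append_cons_of_lt hxy)
        (heq ▸ List.lex_append_cons_of_lt hxy')
    rcases hlex.prefix_or_exists_letter_lt with ⟨hp, hne⟩ | hlet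
    · exact absurd (eq_of_prefix_of_degree_eq hdeg hp (e₁.trans e₂).symm) (Ne.symm hne)
    · exact Or.inr hlet

theorem GLt.append_left (a : List X) {u v : List X} (h : GLt deg u v) :
    GLt deg (a ++ u) (a ++ v) := by
  simp only [GLt, List.map_append, List.sum_append, Nat.add_lt_add_iff_left,
    Nat.add_left_cancel_iff]
  refine h.imp id fun ⟨e, p⟩ => ⟨e, ?_⟩
  rcases p with ⟨⟨t, rfl⟩, hne⟩ | ⟨r, s, t, x, y, hxy, rfl, rfl⟩
  · exact Or.inl ⟨⟨t, List.append_assoc _ _ _⟩, by simpa using hne⟩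
  · exact Or.inr ⟨a ++ r, s, t, x, y, hxy, by simp, by simp⟩

theorem GLt.append_of_degree_le (hdeg : ∀ x, 0 < deg x) {u v u' v' : List X}
    (h : GLt deg u v) (h' : (u'.map deg).sum ≤ (v'.map deg).sum) :
    GLt deg (u ++ u') (v ++ v') := by
  simp only [GLt, List.map_append, List.sum_append]
  rcases h with h | ⟨e, p⟩
  · left; omega
  obtain ⟨r, s, t, x, y, hxy, rfl, rfl⟩ := p.exists_letter_lt_of_degree_eq hdeg e
  rcases h'.lt_or_eq with h' | h'
  · left; omega
  · exact Or.inr ⟨by omega, Or.inr ⟨r, s ++ u', t ++ v', x, y, hxy, by simp, by simp⟩⟩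

theorem IsLyndon.gLt_append_comm {a b : List X} (h : IsLyndon (a ++ b)) (ha : a ≠ [])
    (hb : b ≠ []) : GLt deg (b ++ a) (a ++ b) :=
  Or.inr ⟨by simp only [List.map_append, List.sum_append, add_comm], h.2 a b rfl ha hb⟩

end GradedLex

section LeadingWord

variable {k X : Type*} [Field k] [LinearOrder X] {deg : X → ℕ}

def HasMonicLeadingWord (deg : X → ℕ) (f : FreeAlg k X) (w : List X) : Prop :=
  f.coeff (FreeMonoid.ofList w) = 1 ∧
    ∀ v ∈ f.coeff.support, v ≠ FreeMonoid.ofList w → GLt deg v.toList w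

namespace HasMonicLeadingWord

theorem isLeadingWord {f : FreeAlg k X} {w : List X} (h : HasMonicLeadingWord deg f w) :
    IsLeadingWord (fun a b => GLt deg a.toList b.toList) f (FreeMonoid.ofList w) :=
  ⟨Finsupp.mem_support_iff.mpr (h.1 ▸ one_ne_zero), h.2⟩

theorem single (deg : X → ℕ) (w : List X) :
    HasMonicLeadingWord deg (MonoidAlgebra.single (FreeMonoid.ofList w) (1 : k)) w := by
  classical
  refine ⟨by simp [MonoidAlgebra.coeff_single], fun v hv hne => absurd ?_ hne⟩
  simpa [MonoidAlgebra.coeff_single] using hv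

theorem gLt_of_mem_support (hdeg : ∀ x, 0 < deg x) {f : FreeAlg k X} {w w' : List X}
    (hf : HasMonicLeadingWord deg f w) (hw : GLt deg w w') :
    ∀ v ∈ f.coeff.support, GLt deg v.toList w' := by
  intro v hv
  rcases eq_or_ne v (FreeMonoid.ofList w) with rfl | hne
  · exact hw
  · exact (hf.2 v hv hne).trans hdeg hw

theorem mul (hdeg : ∀ x, 0 < deg x) {f g : FreeAlg k X} {a b : List X}
    (hf : HasMonicLeadingWord deg f a) (hg : HasMonicLeadingWord deg g b) :
    HasMonicLeadingWord deg (f * g) (a ++ b) := by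
  classical
  have hlt : ∀ v ∈ f.coeff.support, ∀ v' ∈ g.coeff.support,
      (v ≠ FreeMonoid.ofList a ∨ v' ≠ FreeMonoid.ofList b) →
      GLt deg (v.toList ++ v'.toList) (a ++ b) := by
    intro v hv v' hv' hne
    rcases eq_or_ne v (FreeMonoid.ofList a) with rfl | hva
    · exact (hg.2 v' hv' (hne.resolve_left (not_not.mpr rfl))).append_left _
    · refine (hf.2 v hv hva).append_of_degree_le hdeg ?_
      rcases eq_or_ne v' (FreeMonoid.ofList b) with rfl | hvb
      · exact le_rfl
      · exact (hg.2 v' hv' hvb).degree_le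
  have huniq : UniqueMul f.coeff.support g.coeff.support
      (FreeMonoid.ofList a) (FreeMonoid.ofList b) := by
    intro v v' hv hv' heq
    by_contra hne
    have hself := hlt v hv v' hv' (not_and_or.mp hne)
    rw [← FreeMonoid.toList_mul, heq, ← FreeMonoid.ofList_append] at hself
    exact GLt.irrefl _ hself
  refine ⟨?_, fun v hv hne => ?_⟩
  · rw [FreeMonoid.ofList_append, MonoidAlgebra.coeff_mul_mul_of_uniqueMul huniq, hf.1, hg.1,
      one_mul]
  · obtain ⟨w, hw, w', hw', rfl⟩ :=
      Finset.mem_mul.mp (MonoidAlgebra.support_coeff_mul_subset f g hv)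
    refine hlt w hw w' hw' (not_and_or.mp fun h => hne ?_)
    rw [h.1, h.2, FreeMonoid.ofList_append]

theorem sub_of_gLt {f g : FreeAlg k X} {w : List X}
    (hf : HasMonicLeadingWord deg f w) (hg : ∀ v ∈ g.coeff.support, GLt deg v.toList w) :
    HasMonicLeadingWord deg (f - g) w := by
  classical
  have hgw : g.coeff (FreeMonoid.ofList w) = 0 :=
    Finsupp.notMem_support_iff.mp fun hw => GLt.irrefl w (hg _ hw)
  refine ⟨by rw [MonoidAlgebra.coeff_sub, Finsupp.sub_apply, hf.1, hgw, sub_zero],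
    fun v hv hne => ?_⟩
  rcases Finset.mem_union.mp (Finsupp.support_sub hv) with hv | hv
  · exact hf.2 v hv hne
  · exact hg v hv

theorem commutator (hdeg : ∀ x, 0 < deg x) {f g : FreeAlg k X} {a b : List X}
    (hf : HasMonicLeadingWord deg f a) (hg : HasMonicLeadingWord deg g b)
    (hba : GLt deg (b ++ a) (a ++ b)) :
    HasMonicLeadingWord deg (f * g - g * f) (a ++ b) :=
  (hf.mul hdeg hg).sub_of_gLt ((hg.mul hdeg hf).gLt_of_mem_support hdeg hba)

end HasMonicLeadingWord

end LeadingWord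

theorem leadingWord_standardBracketing_general {k X : Type*} [Field k] [LinearOrder X]
    (deg : X → ℕ) (hdeg : ∀ x, 0 < deg x)
    (br : List X → FreeAlg k X) (Sh : List X → List X × List X)
    (hSh : ∀ u : List X, 2 ≤ u.length →
      (Sh u).1 ++ (Sh u).2 = u ∧ (Sh u).1 ≠ [] ∧ (Sh u).2 ≠ [] ∧
        ∀ a b : List X, u = a ++ b → a ≠ [] → b ≠ [] → PLe b (Sh u).2)
    (hbr_nil : br [] = 1)
    (hbr_letter : ∀ x : X, br [x] = MonoidAlgebra.single (FreeMonoid.ofList [x]) 1)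
    (hbr_lyndon : ∀ u : List X, 2 ≤ u.length → IsLyndon u →
      br u = br (Sh u).1 * br (Sh u).2 - br (Sh u).2 * br (Sh u).1)
    (hbr_not : ∀ u : List X, 2 ≤ u.length → ¬ IsLyndon u →
      br u = br (Sh u).1 * br (Sh u).2) :
    ∀ u : List X,
      IsLeadingWord (fun a b => GLt deg (FreeMonoid.toList a) (FreeMonoid.toList b))
        (br u) (FreeMonoid.ofList u) ∧
      (br u).coeff (FreeMonoid.ofList u) = 1 := by
  suffices h : ∀ u, HasMonicLeadingWord deg (br u) u from
    fun u => ⟨(h u).isLeadingWord, (h u).1⟩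
  intro u
  induction hn : u.length using Nat.strong_induction_on generalizing u with
  | _ n ih =>
  obtain hlen | hlen := le_or_gt 2 u.length
  · obtain ⟨hsplit, hL, hR, -⟩ := hSh u hlen
    have hlen_split : (Sh u).1.length + (Sh u).2.length = n := by
      rw [← hn, ← List.length_append, hsplit]
    have hL₁ := List.length_pos_iff.mpr hL
    have hR₁ := List.length_pos_iff.mpr hR
    have ihL := ih _ (by omega) (Sh u).1 rfl
    have ihR := ih _ (by omega) (Sh u).2 rfl
    by_cases hLyn : IsLyndon u
    · have hRL : GLt deg ((Sh u).2 ++ (Sh u).1) ((Sh u).1 ++ (Sh u).2) :=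
        IsLyndon.gLt_append_comm (by rwa [hsplit]) hL hR
      rw [hbr_lyndon u hlen hLyn]
      simpa only [hsplit] using ihL.commutator hdeg ihR hRL
    · rw [hbr_not u hlen hLyn]
      simpa only [hsplit] using ihL.mul hdeg ihR
  · rcases u with _ | ⟨x, _ | ⟨y, t⟩⟩
    · simpa [hbr_nil, MonoidAlgebra.one_def] using HasMonicLeadingWord.single (k := k) deg []
    · simpa [hbr_letter] using HasMonicLeadingWord.single (k := k) deg [x]
    · simp at hlen

/-- For every word `u`, the leading word (with respect to the graded lex order) of the
standard bracketing `[u]` is `u`, with coefficient `1`. The standard bracketing is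
characterized by: `[1] = 1`, `[x] = x`, and for `u` of length `≥ 2` with Shirshov
factorization `u = u_L u_R`: `[u] = [[u_L],[u_R]]` if `u` is Lyndon and
`[u] = [u_L][u_R]` otherwise. -/
theorem leadingWord_standardBracketing {k X : Type*} [Field k] [CharZero k] [LinearOrder X]
    (deg : X → ℕ) (hdeg : ∀ x, 0 < deg x)
    (br : List X → FreeAlg k X) (Sh : List X → List X × List X)
    (hSh : ∀ u : List X, 2 ≤ u.length →
      (Sh u).1 ++ (Sh u).2 = u ∧ (Sh u).1 ≠ [] ∧ (Sh u).2 ≠ [] ∧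
        ∀ a b : List X, u = a ++ b → a ≠ [] → b ≠ [] → PLe b (Sh u).2)
    (hbr_nil : br [] = 1)
    (hbr_letter : ∀ x : X, br [x] = MonoidAlgebra.single (FreeMonoid.ofList [x]) 1)
    (hbr_lyndon : ∀ u : List X, 2 ≤ u.length → IsLyndon u →
      br u = br (Sh u).1 * br (Sh u).2 - br (Sh u).2 * br (Sh u).1)
    (hbr_not : ∀ u : List X, 2 ≤ u.length → ¬ IsLyndon u →
      br u = br (Sh u).1 * br (Sh u).2) :
    ∀ u : List X,
      IsLeadingWord (fun a b => GLt deg (FreeMonoid.toList a) (FreeMonoid.toList b))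
        (br u) (FreeMonoid.ofList u) ∧
      (br u).coeff (FreeMonoid.ofList u) = 1 :=
  leadingWord_standardBracketing_general deg hdeg br Sh hSh hbr_nil hbr_letter hbr_lyndon hbr_not
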